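/- arXiv:1608.08861 — 2 statements merged into one kernel-verified Lean document; each statement's English description precedes it below -/
import Mathlib

section
/- Let X be a Banach space and f : X → ℝ ∪ {+∞} proper, convex, lower semicontinuous. If for every x and every p ∈ ∂f(x) one has p(x) ≥ 0, then 0 ∈ ∂f(0), i.e., 0 is a global minimizer of f. -/
/-!
Suppose `f y < f 0`. Take a continuous convex penalty `h` with `h 0 = 0`, `h ≥ λ‖·‖` and `h y`
so small that `f y + h y < f 0`; making `h` grow steeply outside the ball of radius `‖y‖` keeps
`f + h` bounded below, because `f` has a continuous affine minorant. Ekeland's variational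
principle gives a point `x` minimising `f + h + (λ/2) dist · x`, and `x ≠ 0` since
`(f + h) x ≤ (f + h) y < (f + h) 0`. Separating the epigraph of `f` from the open convex region
below the graph of `(f + h) x - h - (λ/2) dist · x` yields `p ∈ ∂f(x)` with
`h x ≤ h 0 + (λ/2)‖x‖ - p x`, so `p x ≤ -(λ/2)‖x‖ < 0`.
-/

open Set

variable {X : Type*} [NormedAddCommGroup X] [NormedSpace ℝ X] [CompleteSpace X]

/-- The convex subdifferential of an extended-real-valued function. -/
def Subdiff (f : X → EReal) (x : X) : Set (X →L[ℝ] ℝ) :=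
  {p | ∀ y : X, f x + ((p (y - x) : ℝ) : EReal) ≤ f y}

/-- The ε-subdifferential. -/
def EpsSubdiff (f : X → EReal) (ε : ℝ) (x : X) : Set (X →L[ℝ] ℝ) :=
  {p | ∀ y : X, f x + ((p (y - x) - ε : ℝ) : EReal) ≤ f y}

/-- f is proper: never -∞ and not identically +∞. -/
def EProper (f : X → EReal) : Prop := (∃ x, f x ≠ ⊤) ∧ ∀ x, f x ≠ ⊥

/-- Convexity of an extended-real-valued function. -/
def EConvex (f : X → EReal) : Prop :=
  ∀ x y : X, ∀ t : ℝ, 0 ≤ t → t ≤ 1 →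
    f (t • x + (1 - t) • y) ≤ ((t : ℝ) : EReal) * f x + (((1 - t : ℝ)) : EReal) * f y


open Filter Topology

theorem EReal.exists_mem_forall_le_add {ι : Type*} {s : Set ι} (hs : s.Nonempty) {g : ι → EReal}
    {b : ℝ} (hb : ∀ z ∈ s, (b : EReal) ≤ g z) {δ : ℝ} (hδ : 0 < δ) :
    ∃ z ∈ s, ∀ w ∈ s, g z ≤ g w + δ := by
  by_cases hm : sInf (g '' s) = ⊤
  · obtain ⟨z, hz⟩ := hs
    refine ⟨z, hz, fun w hw => ?_⟩
    have hw' : g w = ⊤ := by rw [← top_le_iff, ← hm]; exact sInf_le (mem_image_of_mem g hw)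
    simp [hw']
  have hmb : (b : EReal) ≤ sInf (g '' s) := le_sInf (by rintro _ ⟨z, hz, rfl⟩; exact hb z hz)
  have hlt : sInf (g '' s) < sInf (g '' s) + δ := by
    obtain ⟨m, hm'⟩ : ∃ m : ℝ, sInf (g '' s) = m :=
      ⟨_, (EReal.coe_toReal hm ((EReal.bot_lt_coe b).trans_le hmb).ne').symm⟩
    rw [hm']
    exact_mod_cast lt_add_of_pos_right m hδ
  obtain ⟨_, ⟨z, hz, rfl⟩, hzlt⟩ := sInf_lt_iff.1 hlt
  exact ⟨z, hz, fun w hw => hzlt.le.trans (add_le_add_left (sInf_le (mem_image_of_mem g hw)) _)⟩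

section Ekeland

variable {α : Type*} [MetricSpace α] {φ : α → EReal} {ε : ℝ} {x y z : α}

def ekelandSet (φ : α → EReal) (ε : ℝ) (x : α) : Set α :=
  {z | φ z + (ε * dist z x : ℝ) ≤ φ x}

theorem mem_ekelandSet_self : x ∈ ekelandSet φ ε x := by
  simp [ekelandSet]

theorem le_of_mem_ekelandSet (hε : 0 ≤ ε) (h : z ∈ ekelandSet φ ε x) : φ z ≤ φ x :=
  le_trans (le_add_of_nonneg_right (by exact_mod_cast mul_nonneg hε dist_nonneg)) h

theorem ekelandSet_mono (hε : 0 ≤ ε) (h : y ∈ ekelandSet φ ε x) :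
    ekelandSet φ ε y ⊆ ekelandSet φ ε x := fun z hz => calc
  φ z + (ε * dist z x : ℝ) ≤ φ z + (ε * dist z y : ℝ) + (ε * dist y x : ℝ) := by
    rw [add_assoc, ← EReal.coe_add, ← mul_add]
    gcongr
    exact dist_triangle z y x
  _ ≤ φ y + (ε * dist y x : ℝ) := by gcongr; exact hz
  _ ≤ φ x := h

theorem isClosed_ekelandSet (hφ : LowerSemicontinuous φ) : IsClosed (ekelandSet φ ε x) := by
  have hdist : LowerSemicontinuous fun z => ((ε * dist z x : ℝ) : EReal) :=
    (continuous_coe_real_ereal.comp (by fun_prop)).lowerSemicontinuous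
  exact (hφ.add' hdist fun z => EReal.continuousAt_add (.inr (EReal.coe_ne_bot _))
    (.inr (EReal.coe_ne_top _))).isClosed_preimage (φ x)

theorem mul_dist_le_of_mem_ekelandSet {δ : ℝ} (h : z ∈ ekelandSet φ ε x) (hx : φ x ≤ φ z + δ)
    (hz : φ z ≠ ⊥) (hz' : φ z ≠ ⊤) : ε * dist z x ≤ δ := by
  lift φ z to ℝ using ⟨hz', hz⟩ with r hr
  have := h.trans hx
  rw [← hr] at this
  exact_mod_cast (EReal.addLECancellable_coe r) this

theorem LowerSemicontinuous.exists_le_forall_le_add_dist [CompleteSpace α]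
    (hφ : LowerSemicontinuous φ) {b : ℝ} (hb : ∀ z, (b : EReal) ≤ φ z) (hε : 0 < ε) {x₀ : α}
    (hx₀ : φ x₀ ≠ ⊤) : ∃ v, φ v ≤ φ x₀ ∧ ∀ z, φ v ≤ φ z + (ε * dist z v : ℝ) := by
  have step (n : ℕ) (x : α) : ∃ y ∈ ekelandSet φ ε x,
      ∀ z ∈ ekelandSet φ ε x, φ y ≤ φ z + (ε / (n + 1) : ℝ) :=
    EReal.exists_mem_forall_le_add ⟨x, mem_ekelandSet_self⟩ (fun z _ => hb z) (by positivity)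
  choose next hnext_mem hnext_le using step
  let x : ℕ → α := fun n => Nat.rec x₀ next n
  have hchain (n m : ℕ) (hnm : n ≤ m) : x m ∈ ekelandSet φ ε (x n) := by
    induction m, hnm using Nat.le_induction with
    | base => exact mem_ekelandSet_self
    | succ m _ ih => exact ekelandSet_mono hε.le ih (hnext_mem m (x m))
  have hsmall (n : ℕ) (z : α) (hz : z ∈ ekelandSet φ ε (x (n + 1))) :
      dist z (x (n + 1)) ≤ 1 / (n + 1) := by
    have hzn := ekelandSet_mono hε.le (hnext_mem n (x n)) hz
    have hz₀ := le_of_mem_ekelandSet hε.le (ekelandSet_mono hε.le (hchain 0 n n.zero_le) hzn)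
    have := mul_dist_le_of_mem_ekelandSet hz (hnext_le n (x n) z hzn)
      ((EReal.bot_lt_coe b).trans_le (hb z)).ne' (ne_top_of_le_ne_top hx₀ hz₀)
    rwa [← le_div_iff₀' hε, div_div_cancel_left' hε.ne', inv_eq_one_div] at this
  have htendsto (z : α) (hz : ∀ n, z ∈ ekelandSet φ ε (x (n + 1))) :
      Tendsto (fun n => x (n + 1)) atTop (𝓝 z) :=
    tendsto_iff_dist_tendsto_zero.2 <| squeeze_zero (fun _ => dist_nonneg)
      (fun n => dist_comm z _ ▸ hsmall n z (hz n)) tendsto_one_div_add_atTop_nhds_zero_nat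
  have hcauchy : CauchySeq fun n => x (n + 1) :=
    cauchySeq_of_le_tendsto_0' _ (fun n m hnm => dist_comm (x (n + 1)) _ ▸
      hsmall n _ (hchain (n + 1) (m + 1) (by omega))) tendsto_one_div_add_atTop_nhds_zero_nat
  obtain ⟨v, hv⟩ := cauchySeq_tendsto_of_complete hcauchy
  have hvS (n : ℕ) : v ∈ ekelandSet φ ε (x n) :=
    (isClosed_ekelandSet hφ).mem_of_tendsto hv
      (eventually_atTop.2 ⟨n, fun m hm => hchain n (m + 1) (by omega)⟩)
  refine ⟨v, le_of_mem_ekelandSet hε.le (hvS 0), fun z => le_of_not_gt fun hz => ?_⟩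
  have hzS (n : ℕ) : z ∈ ekelandSet φ ε (x (n + 1)) :=
    ekelandSet_mono hε.le (hvS (n + 1)) hz.le
  obtain rfl : z = v := tendsto_nhds_unique (htendsto z hzS) hv
  simp at hz

end Ekeland

theorem ContinuousLinearMap.apply_prod_eq_add_mul {M : Type*} [TopologicalSpace M]
    [AddCommMonoid M] [Module ℝ M] (F : M × ℝ →L[ℝ] ℝ) (z : M) (t : ℝ) :
    F (z, t) = F (z, 0) + t * F (0, 1) := by
  rw [← smul_eq_mul, ← map_smul, ← map_add, Prod.smul_mk, smul_zero, smul_eq_mul, mul_one,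
    Prod.mk_add_mk, add_zero, zero_add]

def realEpigraph {E : Type*} (f : E → EReal) : Set (E × ℝ) := {q | f q.1 ≤ q.2}

section RealEpigraph

variable {E : Type*} {f : E → EReal}

theorem coe_le_of_forall_mem_realEpigraph {a : ℝ} {y : E}
    (h : ∀ t, (y, t) ∈ realEpigraph f → a ≤ t) : (a : EReal) ≤ f y :=
  EReal.le_of_forall_lt_iff_le.1 fun t ht => EReal.coe_le_coe_iff.2 (h t ht.le)

theorem LowerSemicontinuous.isClosed_realEpigraph [TopologicalSpace E]
    (hf : LowerSemicontinuous f) : IsClosed (realEpigraph f) :=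
  hf.isClosed_epigraph.preimage (continuous_id.prodMap continuous_coe_real_ereal)

end RealEpigraph

omit [CompleteSpace X] in
theorem EConvex.convex_realEpigraph {f : X → EReal} (hf : EConvex f) :
    Convex ℝ (realEpigraph f) := by
  rintro ⟨x, s⟩ hx ⟨y, t⟩ hy a b ha hb hab
  obtain rfl : b = 1 - a := by linarith
  calc f (a • x + (1 - a) • y) ≤ (a : EReal) * f x + ((1 - a : ℝ) : EReal) * f y :=
        hf x y a ha (by linarith)
    _ ≤ (a : EReal) * s + ((1 - a : ℝ) : EReal) * t := by
        gcongr
        · exact hx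
        · exact hy
    _ = ((a • (x, s) + (1 - a) • (y, t)).2 : ℝ) := by simp

omit [CompleteSpace X] in
theorem EConvex.exists_affine_le {f : X → EReal} (hconv : EConvex f)
    (hlsc : LowerSemicontinuous f) {x₀ : X} {r₀ : ℝ} (hx₀ : f x₀ = r₀) :
    ∃ (ℓ : X →L[ℝ] ℝ) (c : ℝ), ∀ z, ((ℓ z + c : ℝ) : EReal) ≤ f z := by
  have hout : (x₀, r₀ - 1) ∉ realEpigraph f := by
    simp only [realEpigraph, mem_ofPred_eq, hx₀, EReal.coe_le_coe_iff]
    linarith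
  obtain ⟨F, u, hFout, hFE⟩ :=
    geometric_hahn_banach_point_closed hconv.convex_realEpigraph hlsc.isClosed_realEpigraph hout
  have hβ : 0 < F (0, 1) := by
    have hx₀E := hFE (x₀, r₀) (by simp [realEpigraph, hx₀])
    rw [F.apply_prod_eq_add_mul] at hx₀E hFout
    linarith
  refine ⟨-(F (0, 1))⁻¹ • F.comp (.inl ℝ X ℝ), u / F (0, 1),
    fun z => coe_le_of_forall_mem_realEpigraph fun t ht => ?_⟩
  have hzE := hFE (z, t) ht
  rw [F.apply_prod_eq_add_mul] at hzE
  simp only [smul_apply, ContinuousLinearMap.comp_apply,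
    ContinuousLinearMap.inl_apply, smul_eq_mul]
  rw [neg_mul, ← div_eq_inv_mul, ← sub_eq_neg_add, div_sub_div_same, div_le_iff₀ hβ]
  linarith

omit [CompleteSpace X] in
theorem EConvex.exists_mem_subdiff_of_forall_le_add {f : X → EReal} (hconv : EConvex f)
    {g : X → ℝ} (hg : ConvexOn ℝ univ g) (hgc : Continuous g) {x : X} {r : ℝ} (hx : f x = r)
    (hmin : ∀ z, f x + g x ≤ f z + g z) :
    ∃ p ∈ Subdiff f x, ∀ z, g x ≤ g z + p (z - x) := by
  set O : Set (X × ℝ) := {q | q.2 + g q.1 < r + g x}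
  have hO_open : IsOpen O := isOpen_lt (by fun_prop) continuous_const
  have hO_convex : Convex ℝ O := by
    have : ConvexOn ℝ univ fun q : X × ℝ => q.2 + g q.1 :=
      ((LinearMap.snd ℝ X ℝ).convexOn convex_univ).add (hg.comp_linearMap (LinearMap.fst ℝ X ℝ))
    simpa using this.convex_lt (r + g x)
  have hdisj : Disjoint O (realEpigraph f) := by
    refine disjoint_left.2 fun q (hqO : q.2 + g q.1 < r + g x) hqE => hqO.not_ge ?_
    have := (hmin q.1).trans (add_le_add hqE le_rfl)
    rwa [hx, ← EReal.coe_add, ← EReal.coe_add, EReal.coe_le_coe_iff] at this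
  obtain ⟨F, u, hFO, hFE⟩ :=
    geometric_hahn_banach_open hO_convex hO_open hconv.convex_realEpigraph hdisj
  have hxE : u ≤ F (x, r) := hFE _ (by simp [realEpigraph, hx])
  rw [F.apply_prod_eq_add_mul] at hxE
  have hβ : 0 < F (0, 1) := by
    have := hFO (x, r - 1) (by simp [O])
    rw [F.apply_prod_eq_add_mul] at this
    linarith
  have hkey (z : X) : F (z, 0) + (r + g x - g z) * F (0, 1) ≤ u := by
    refine le_of_forall_pos_lt_add fun η hη => ?_
    have := hFO (z, r + g x - g z - η / F (0, 1))
      (by simp only [O, mem_ofPred_eq]; linarith [div_pos hη hβ])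
    rw [F.apply_prod_eq_add_mul, sub_mul, div_mul_cancel₀ η hβ.ne'] at this
    linarith
  refine ⟨-(F (0, 1))⁻¹ • F.comp (.inl ℝ X ℝ), fun y => ?_, fun z => ?_⟩
  · rw [hx, ← EReal.coe_add]
    refine coe_le_of_forall_mem_realEpigraph fun t ht => ?_
    have hyE := hFE _ ht
    rw [F.apply_prod_eq_add_mul] at hyE
    have := hkey x
    simp only [smul_apply, ContinuousLinearMap.comp_apply,
      ContinuousLinearMap.inl_apply, smul_eq_mul, map_sub]
    field_simp
    linarith
  · have := hkey z
    simp only [smul_apply, ContinuousLinearMap.comp_apply,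
      ContinuousLinearMap.inl_apply, smul_eq_mul, map_sub]
    field_simp
    linarith

theorem EConvex.exists_le_mem_subdiff_forall_le {f : X → EReal}
    (hconv : EConvex f) (hlsc : LowerSemicontinuous f) {h : X → ℝ} (hh : ConvexOn ℝ univ h)
    (hhc : Continuous h) {b : ℝ} (hb : ∀ z, (b : EReal) ≤ f z + h z) {y : X} (hy : f y ≠ ⊤)
    {ε : ℝ} (hε : 0 < ε) :
    ∃ x, f x + h x ≤ f y + h y ∧ ∃ p ∈ Subdiff f x, ∀ z, h x ≤ h z + ε * dist z x + p (z - x) := by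
  have hφ : LowerSemicontinuous fun z => f z + h z :=
    hlsc.add' (continuous_coe_real_ereal.comp hhc).lowerSemicontinuous fun z =>
      EReal.continuousAt_add (.inr (EReal.coe_ne_bot _)) (.inr (EReal.coe_ne_top _))
  obtain ⟨x, hxy, hmin⟩ := hφ.exists_le_forall_le_add_dist hb hε
    (EReal.add_ne_top hy (EReal.coe_ne_top _))
  have hfx : f x = (f x).toReal := by
    refine (EReal.coe_toReal ?_ ?_).symm
    · exact fun hx => (hxy.trans_lt (EReal.add_lt_top hy (EReal.coe_ne_top _))).ne (by simp [hx])
    · exact fun hx => (EReal.bot_lt_coe b).not_ge (by simpa [hx] using hb x)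
  obtain ⟨p, hp, hph⟩ := hconv.exists_mem_subdiff_of_forall_le_add
    (hh.add ((convexOn_dist x convex_univ).smul hε.le)) (by fun_prop) hfx
    (fun z => by simpa [add_assoc] using hmin z)
  exact ⟨x, hxy, p, hp, fun z => by simpa [add_assoc] using hph z⟩

theorem EConvex.exists_mem_subdiff_apply_neg {f : X → EReal} (hf : EProper f) (hconv : EConvex f)
    (hlsc : LowerSemicontinuous f) {y : X} (hy : f y < f 0) :
    ∃ x, ∃ p ∈ Subdiff f x, p x < 0 := by
  obtain ⟨r, hr⟩ : ∃ r : ℝ, f y = r := ⟨_, (EReal.coe_toReal hy.ne_top (hf.2 y)).symm⟩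
  obtain ⟨ℓ, c, hℓ⟩ := hconv.exists_affine_le hlsc hr
  obtain ⟨lam, hlam, hgap⟩ : ∃ lam > 0, ((r + lam * ‖y‖ : ℝ) : EReal) < f 0 := by
    obtain ⟨q, hrq, hq⟩ := EReal.lt_iff_exists_real_btwn.1 (hr ▸ hy)
    have hrq : r < q := EReal.coe_lt_coe_iff.1 hrq
    refine ⟨(q - r) / (‖y‖ + 1), by positivity, lt_of_le_of_lt ?_ hq⟩
    have : (q - r) / (‖y‖ + 1) * ‖y‖ ≤ q - r := by
      rw [div_mul_eq_mul_div, div_le_iff₀ (by positivity)]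
      nlinarith [norm_nonneg y]
    exact EReal.coe_le_coe_iff.2 (by linarith)
  -- outside the ball of radius `‖y‖` the penalty grows fast enough to beat the affine minorant
  let h : X → ℝ := fun z => lam * ‖z‖ + ‖ℓ‖ * max (‖z‖ - ‖y‖) 0
  have h0 : h 0 = 0 := by simp [h]
  have hh : ConvexOn ℝ univ h :=
    ((convexOn_norm convex_univ).smul hlam.le).add ((((convexOn_norm convex_univ).sub
      (concaveOn_const _ convex_univ)).sup (convexOn_const 0 convex_univ)).smul (norm_nonneg ℓ))
  have hb (z : X) : ((c - ‖ℓ‖ * ‖y‖ : ℝ) : EReal) ≤ f z + h z := by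
    refine le_trans ?_ (add_le_add (hℓ z) le_rfl)
    rw [← EReal.coe_add, EReal.coe_le_coe_iff]
    have hℓz : -(‖ℓ‖ * ‖z‖) ≤ ℓ z := neg_le_of_abs_le (Real.norm_eq_abs _ ▸ ℓ.le_opNorm z)
    have hmax : ‖ℓ‖ * (‖z‖ - ‖y‖) ≤ ‖ℓ‖ * max (‖z‖ - ‖y‖) 0 :=
      mul_le_mul_of_nonneg_left (le_max_left _ _) (norm_nonneg ℓ)
    have : 0 ≤ lam * ‖z‖ := by positivity
    simp only [h]
    linarith
  obtain ⟨x, hxy, p, hp, hpx⟩ :=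
    hconv.exists_le_mem_subdiff_forall_le hlsc hh (by fun_prop) hb (hr ▸ EReal.coe_ne_top r)
      (half_pos hlam)
  refine ⟨x, p, hp, ?_⟩
  have hx : x ≠ 0 := by
    rintro rfl
    have : f 0 ≤ ((r + lam * ‖y‖ : ℝ) : EReal) := by simpa [h0, h, hr] using hxy
    exact (this.trans_lt hgap).false
  have hxlam : lam * ‖x‖ ≤ h x :=
    le_add_of_nonneg_right (mul_nonneg (norm_nonneg ℓ) (le_max_right _ _))
  have := hpx 0
  rw [h0, dist_zero_left, zero_sub, map_neg] at this
  nlinarith [norm_pos_iff.2 hx]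

theorem stmt0 (f : X → EReal) (hproper : EProper f) (hconv : EConvex f)
    (hlsc : LowerSemicontinuous f)
    (h : ∀ x : X, ∀ p ∈ Subdiff f x, (0 : ℝ) ≤ p x) :
    (0 : X →L[ℝ] ℝ) ∈ Subdiff f 0 := by
  by_contra hmin
  obtain ⟨y, hy⟩ : ∃ y, f y < f 0 := by simpa [Subdiff] using hmin
  obtain ⟨x, p, hp, hpx⟩ := hconv.exists_mem_subdiff_apply_neg hproper hlsc hy
  exact hpx.not_ge (h x p hp)
end

section
/- Let X be a Banach space, f : X → ℝ ∪ {+∞} proper convex, ε > 0, and x₀ ∈ dom f. Then ∂_ε f(x₀) is nonempty. -/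
open Set

variable {X : Type*} [NormedAddCommGroup X] [NormedSpace ℝ X] [CompleteSpace X]

theorem stmt13 (f : X → EReal) (hproper : EProper f) (hconv : EConvex f)
    (hlsc : LowerSemicontinuous f) (ε : ℝ) (hε : 0 < ε) (x₀ : X) (hx₀ : f x₀ ≠ ⊤) :
    (EpsSubdiff f ε x₀).Nonempty := by
  obtain ⟨-, hbot⟩ := hproper
  set r₀ : ℝ := (f x₀).toReal with hr₀
  have hfx₀ : f x₀ = (r₀ : EReal) := (EReal.coe_toReal hx₀ (hbot x₀)).symm
  set C : Set (X × ℝ) := {p | f p.1 ≤ (p.2 : EReal)} with hC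
  -- C is closed
  have hCclosed : IsClosed C := by
    have h := hlsc.isClosed_epigraph
    have hEq : C = (fun p : X × ℝ => (p.1, (p.2 : EReal))) ⁻¹'
        {p : X × EReal | f p.1 ≤ p.2} := rfl
    rw [hEq]
    exact h.preimage (continuous_fst.prodMk (continuous_coe_real_ereal.comp continuous_snd))
  -- C is convex
  have hCconv : Convex ℝ C := by
    rintro ⟨x, s⟩ hx ⟨y, t⟩ hy a b ha hb hab
    simp only [hC, mem_setOf_eq] at hx hy ⊢
    have hb' : b = 1 - a := by linarith
    subst hb'
    calc f ((a • (x, s) + (1 - a) • (y, t)).1)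
        = f (a • x + (1 - a) • y) := rfl
      _ ≤ (a : EReal) * f x + ((1 - a : ℝ) : EReal) * f y :=
          hconv x y a ha (by linarith)
      _ ≤ (a : EReal) * (s : EReal) + ((1 - a : ℝ) : EReal) * (t : EReal) := by
          exact add_le_add (mul_le_mul_of_nonneg_left hx (EReal.coe_nonneg.2 ha))
            (mul_le_mul_of_nonneg_left hy (EReal.coe_nonneg.2 (by linarith)))
      _ ≤ (((a • (x, s) + (1 - a) • (y, t)).2 : ℝ) : EReal) := by
          push_cast
          norm_num
  -- The point below the epigraph
  have hpt : (x₀, r₀ - ε) ∉ C := by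
    simp only [hC, mem_setOf_eq, hfx₀]
    push_neg
    exact_mod_cast (by linarith : r₀ - ε < r₀)
  obtain ⟨g, u, hgC, hgu⟩ := geometric_hahn_banach_closed_point hCconv hCclosed hpt
  -- decompose g
  set p : X →L[ℝ] ℝ := g.comp (ContinuousLinearMap.inl ℝ X ℝ) with hp
  set c : ℝ := g (0, 1) with hcdef
  have hdecomp : ∀ x : X, ∀ t : ℝ, g (x, t) = p x + t * c := by
    intro x t
    have h0 : (x, t) = (x, (0 : ℝ)) + t • ((0 : X), (1 : ℝ)) := by
      simp [Prod.ext_iff]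
    rw [h0, map_add, map_smul]
    simp [hp, hcdef, smul_eq_mul]
  -- g is < u on C, > u at the point
  have hgu' : u < p x₀ + (r₀ - ε) * c := by rw [← hdecomp]; exact hgu
  have hmem : ∀ y : X, f y ≠ ⊤ → p y + (f y).toReal * c < u := by
    intro y hy
    have h1 : (y, (f y).toReal) ∈ C := by
      simp only [hC, mem_setOf_eq]
      rw [EReal.coe_toReal hy (hbot y)]
    have h2 := hgC _ h1
    rwa [hdecomp] at h2
  -- c < 0
  have hcneg : c < 0 := by
    by_contra hc
    push_neg at hc
    rcases eq_or_lt_of_le hc with hc0 | hc0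
    · have h1 := hmem x₀ hx₀
      rw [← hc0] at h1 hgu'
      rw [← hr₀] at h1
      simp at h1 hgu'
      linarith
    · have hT : ∀ T : ℝ, r₀ ≤ T → p x₀ + T * c < u := by
        intro T hT
        have hmemT : (x₀, T) ∈ C := by
          simp only [hC, mem_setOf_eq, hfx₀]
          exact_mod_cast hT
        have h2 := hgC _ hmemT
        rwa [hdecomp] at h2
      have h2 := hT (max r₀ ((u - p x₀) / c)) (le_max_left _ _)
      have h3 : (u - p x₀) / c ≤ max r₀ ((u - p x₀) / c) := le_max_right _ _
      rw [div_le_iff₀ hc0] at h3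
      nlinarith [le_max_left r₀ ((u - p x₀) / c)]
  -- define q and verify
  refine ⟨(-c)⁻¹ • p, fun y => ?_⟩
  by_cases hy : f y = ⊤
  · rw [hy]; exact le_top
  · have h1 := hmem y hy
    have hfy : f y = ((f y).toReal : EReal) := (EReal.coe_toReal hy (hbot y)).symm
    rw [hfx₀, hfy, ← EReal.coe_add, EReal.coe_le_coe_iff]
    have hq : ((-c)⁻¹ • p) (y - x₀) = (-c)⁻¹ * (p y - p x₀) := by
      simp [map_sub, mul_sub]
    rw [hq]
    have hcpos : 0 < -c := by linarith
    have hinv : 0 < (-c)⁻¹ := inv_pos.2 hcpos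
    -- from h1 : p y + (f y).toReal * c < u and hgu' : u < p x₀ + (r₀ - ε) * c
    have key : p y - p x₀ ≤ ((f y).toReal - (r₀ - ε)) * (-c) := by nlinarith
    have key2 : (-c)⁻¹ * (p y - p x₀) ≤ (f y).toReal - (r₀ - ε) := by
      rw [inv_mul_le_iff₀ hcpos, mul_comm]
      exact key
    linarith
end
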